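/- arXiv:1402.4879 — 4 statements merged into one kernel-verified Lean document; each statement's English description precedes it below -/
import Mathlib

section
/- Let M be the real 4×4 matrix [[h−a, f, −b, 0],[g, e−a, 0, −b],[−c, 0, h−d, f],[0, −c, g, e−d]] with a,b,c,d,e,f,g,h ∈ ℝ. Then the eigenvalues of M (over ℂ) can be ordered as λ₁, λ₂, λ₃, λ₄ so that λ₁ + λ₂ = λ₃ + λ₄. -/
/-!
`adMatrix a b c d e f g h` is `1 ⊗ K - A ⊗ 1` for `K = !![h, f; g, e]` and `A = !![a, b; c, d]`,
so its eigenvalues are the differences `κᵢ - αⱼ` of eigenvalues of `K` and of `A`, and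
`(κ₁ - α₁) + (κ₂ - α₂) = (κ₁ - α₂) + (κ₂ - α₁)`. Concretely, expanding the determinant shows
that the characteristic polynomial depends on `K` only through `tr K` and `det K`; substituting
`κ₁ + κ₂` and `κ₁ κ₂` for them splits it into two factors `(X - κᵢ + a)(X - κᵢ + d) - bc`, each of
which is `(X - κᵢ + α₁)(X - κᵢ + α₂)`.
-/

open Polynomial

theorem IsAlgClosed.exists_add_eq_and_mul_eq {k : Type*} [Field k] [IsAlgClosed k] (s p : k) :
    ∃ x y : k, x + y = s ∧ x * y = p := by
  obtain ⟨x, hx⟩ := IsAlgClosed.exists_root (C 1 * X ^ 2 + C (-s) * X + C p)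
    (by rw [degree_quadratic one_ne_zero]; decide)
  refine ⟨x, s - x, by ring, ?_⟩
  simp only [IsRoot, eval_add, eval_mul, eval_C, eval_pow, eval_X] at hx
  linear_combination -hx

namespace Matrix

variable {R S : Type*} [CommRing R] [CommRing S]

def adMatrix (a b c d e f g h : R) : Matrix (Fin 4) (Fin 4) R :=
  !![h - a, f, -b, 0; g, e - a, 0, -b; -c, 0, h - d, f; 0, -c, g, e - d]

theorem map_adMatrix (φ : R →+* S) (a b c d e f g h : R) :
    (adMatrix a b c d e f g h).map φ =
      adMatrix (φ a) (φ b) (φ c) (φ d) (φ e) (φ f) (φ g) (φ h) := by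
  ext i j
  fin_cases i <;> fin_cases j <;> simp [adMatrix]

theorem charpoly_adMatrix (a b c d e f g h : R) :
    (adMatrix a b c d e f g h).charpoly =
      let u := C (e + h) - (2 * X + C (a + d))
      let w := (X + C a) * (X + C d) - C (b * c) - C (e * h - f * g)
      w ^ 2 + u * w * C (e + h) + u ^ 2 * C (e * h - f * g) := by
  rw [charpoly, det_succ_row_zero]
  simp [adMatrix, Fin.sum_univ_succ, det_fin_three, Fin.succAbove, charmatrix_apply]
  ring

theorem charpoly_adMatrix_eq_prod {a b c d e f g h κ₁ κ₂ α₁ α₂ : R}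
    (hκ_add : κ₁ + κ₂ = e + h) (hκ_mul : κ₁ * κ₂ = e * h - f * g)
    (hα_add : α₁ + α₂ = a + d) (hα_mul : α₁ * α₂ = a * d - b * c) :
    (adMatrix a b c d e f g h).charpoly =
      (X - C (κ₁ - α₁)) * (X - C (κ₂ - α₂)) * (X - C (κ₁ - α₂)) * (X - C (κ₂ - α₁)) := by
  have shift (z : R[X]) :
      (z + C a) * (z + C d) - C b * C c = (z + C α₁) * (z + C α₂) := by
    have hα_add' : C α₁ + C α₂ = C a + C d := by simp only [← map_add, hα_add]
    have hα_mul' : C α₁ * C α₂ = C a * C d - C b * C c := by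
      simp only [← map_mul, ← map_sub, hα_mul]
    linear_combination (-z) * hα_add' - hα_mul'
  calc (adMatrix a b c d e f g h).charpoly
      = ((X - C κ₁ + C a) * (X - C κ₁ + C d) - C b * C c) *
          ((X - C κ₂ + C a) * (X - C κ₂ + C d) - C b * C c) := by
        rw [charpoly_adMatrix, ← hκ_add, ← hκ_mul]
        simp only [map_add, map_mul]
        ring
    _ = (X - C κ₁ + C α₁) * (X - C κ₁ + C α₂) * ((X - C κ₂ + C α₁) * (X - C κ₂ + C α₂)) := by
        rw [shift, shift]
    _ = (X - C (κ₁ - α₁)) * (X - C (κ₂ - α₂)) * (X - C (κ₁ - α₂)) * (X - C (κ₂ - α₁)) := by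
        simp only [map_sub]
        ring

end Matrix

open Polynomial in
/-- The eigenvalues of the ad-matrix `M` can be ordered so that
`λ₁ + λ₂ = λ₃ + λ₄`. -/
theorem stmt6 (a b c d e f g h : ℝ) :
    let M : Matrix (Fin 4) (Fin 4) ℝ :=
      !![h - a, f, -b, 0; g, e - a, 0, -b; -c, 0, h - d, f; 0, -c, g, e - d]
    ∃ l1 l2 l3 l4 : ℂ,
      (M.map (fun x : ℝ => (x : ℂ))).charpoly =
        (X - C l1) * (X - C l2) * (X - C l3) * (X - C l4) ∧
      l1 + l2 = l3 + l4 := by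
  intro M
  obtain ⟨κ₁, κ₂, hκ_add, hκ_mul⟩ :=
    IsAlgClosed.exists_add_eq_and_mul_eq ((e : ℂ) + h) (e * h - f * g)
  obtain ⟨α₁, α₂, hα_add, hα_mul⟩ :=
    IsAlgClosed.exists_add_eq_and_mul_eq ((a : ℂ) + d) (a * d - b * c)
  have hM : M.map (fun x : ℝ => (x : ℂ)) = Matrix.adMatrix (a : ℂ) b c d e f g h :=
    Matrix.map_adMatrix Complex.ofRealHom a b c d e f g h
  refine ⟨κ₁ - α₁, κ₂ - α₂, κ₁ - α₂, κ₂ - α₁, ?_, by ring⟩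
  rw [hM]
  exact Matrix.charpoly_adMatrix_eq_prod hκ_add hκ_mul hα_add hα_mul
end

section
/- There is no injective Lie algebra homomorphism from the five-dimensional real Lie algebra with basis e₁,...,e₅ and nonzero brackets [e₂,e₃]=e₁, [e₂,e₅]=e₃, [e₄,e₅]=e₄ (algebra A₅,₂₂) into gl(4,ℝ) whose image consists of upper triangular matrices. -/
/-!
Write `x, w, y, z, h` for the images of `e₂, e₅, e₃, e₁, e₄`. Since `z = [x, y]` is a commutator
of upper triangular matrices it is nilpotent, and over `ℂ` the space splits into generalized
eigenspaces of `w`. The relation `[h, w] = h` shows that `w` has at least two eigenvalues when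
`h ≠ 0`, so each generalized eigenspace has dimension at most `3`. These eigenspaces are stable
under `x, y, z, w`, which satisfy the relations of the filiform algebra `[x, w] = y`,
`[x, y] = z`, `[y, w] = 0`, `z` central. In dimension `≤ 3` such a `z` must vanish: replacing
`z` by its last nonzero power reduces to `z² = 0`, and then in a basis adapted to `z` the
relations become a small matrix computation. Hence `z = 0`, contradicting faithfulness.
-/

open Module Matrix Polynomial Submodule

theorem eq_zero_of_mul_sub_mul_eq_self {A : Type*} [Ring A] {h N : A} (hN : IsNilpotent N)
    (hhN : h * N - N * h = h) : h = 0 := by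
  have hsemi : SemiconjBy h N (N + 1) := by
    rw [SemiconjBy, add_mul, one_mul]
    exact sub_eq_iff_eq_add'.mp hhN
  obtain ⟨k, hk⟩ := id hN
  have hpow : h * N ^ k = (N + 1) ^ k * h := hsemi.pow_right k
  rw [hk, mul_zero] at hpow
  exact ((hN.isUnit_add_one.pow k).mul_right_eq_zero).mp hpow.symm

theorem pow_succ_mul_eq_of_mul_sub_mul {A : Type*} [Ring A] {a g y : A} (h : g * a - a * g = y)
    (hy : Commute a y) (n : ℕ) : a ^ (n + 1) * g = g * a ^ (n + 1) - (n + 1) • (y * a ^ n) := by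
  have hag : a * g = g * a - y := by rw [← h, sub_sub_cancel]
  induction n with
  | zero => simp [hag]
  | succ n ih =>
    rw [pow_succ', mul_assoc, ih, mul_sub, ← mul_assoc, hag, mul_smul_comm, ← mul_assoc, hy.eq,
      mul_assoc y, ← pow_succ', sub_mul, mul_assoc g, ← pow_succ', succ_nsmul _ (n + 1)]
    abel

theorem Matrix.IsUpperTriangular.mul_apply_self {n R : Type*} [Fintype n] [LinearOrder n]
    [NonUnitalNonAssocSemiring R] {A B : Matrix n n R} (hA : A.IsUpperTriangular)
    (hB : B.IsUpperTriangular) (i : n) : (A * B) i i = A i i * B i i := by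
  rw [mul_apply]
  refine Finset.sum_eq_single i (fun k _ hk => ?_) (by simp)
  rcases hk.lt_or_gt with h | h
  · rw [hA h, zero_mul]
  · rw [hB h, mul_zero]

theorem Matrix.IsUpperTriangular.isNilpotent_mul_sub_mul {n R : Type*} [Fintype n]
    [DecidableEq n] [LinearOrder n] [CommRing R] {A B : Matrix n n R} (hA : A.IsUpperTriangular)
    (hB : B.IsUpperTriangular) : IsNilpotent (A * B - B * A) := by
  have hC : (A * B - B * A).IsUpperTriangular := (hA.mul hB).sub (hB.mul hA)
  refine ⟨Fintype.card n, ?_⟩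
  simpa [charpoly_of_isUpperTriangular _ hC, hA.mul_apply_self hB, hB.mul_apply_self hA,
    mul_comm] using aeval_self_charpoly (A * B - B * A)

section CentralizerOfSingle

variable {R : Type*} [CommRing R]

theorem Matrix.mul_sub_mul_ne_single_of_commute_fin_two [Nontrivial R]
    {X Y : Matrix (Fin 2) (Fin 2) R} (hX : Commute (single 1 0 1) X)
    (hY : Commute (single 1 0 1) Y) : X * Y - Y * X ≠ single 1 0 1 := by
  intro hXY
  have x00 := congr_fun₂ hX.eq 1 0
  have y00 := congr_fun₂ hY.eq 1 0
  have h := congr_fun₂ hXY 1 0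
  simp only [sub_apply, mul_apply, Fin.sum_univ_two, single_apply, Fin.reduceEq, and_self,
    and_false, false_and, ↓reduceIte, mul_zero, zero_mul, mul_one, one_mul, add_zero, zero_add]
    at x00 y00 h
  exact one_ne_zero (by linear_combination -h + X 1 0 * y00 - Y 1 0 * x00 : (1 : R) = 0)

theorem Matrix.entries_of_commute_single_two_zero {X : Matrix (Fin 3) (Fin 3) R}
    (hX : Commute (single 2 0 1) X) :
    X 0 1 = 0 ∧ X 1 2 = 0 ∧ X 2 2 = X 0 0 := by
  have h := fun i j => congr_fun₂ hX.eq i j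
  simp only [mul_apply, Fin.sum_univ_three, single_apply] at h
  exact ⟨by simpa using h 2 1, by simpa using (h 1 0).symm, by simpa using (h 2 0).symm⟩

theorem Matrix.mul_sub_mul_ne_single_of_commute_fin_three [Nontrivial R] [IsReduced R]
    {X Y W : Matrix (Fin 3) (Fin 3) R} (hX : Commute (single 2 0 1) X)
    (hY : Commute (single 2 0 1) Y) (hW : Commute (single 2 0 1) W)
    (hXW : X * W - W * X = Y) (hYW : Commute Y W) : X * Y - Y * X ≠ single 2 0 1 := by
  intro hXY
  obtain ⟨x01, x12, x22⟩ := entries_of_commute_single_two_zero hX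
  obtain ⟨y01, y12, y22⟩ := entries_of_commute_single_two_zero hY
  obtain ⟨w01, w12, w22⟩ := entries_of_commute_single_two_zero hW
  have c := congr_fun₂ hXW 1 0
  have d := congr_fun₂ hXW 2 1
  have e := congr_fun₂ hXY 1 0
  have f := congr_fun₂ hXY 2 1
  have g := congr_fun₂ hXY 2 0
  have k := congr_fun₂ hYW.eq 1 0
  have l := congr_fun₂ hYW.eq 2 1
  simp only [sub_apply, mul_apply, Fin.sum_univ_three, single_apply,
    x01, x12, x22, y01, y12, y22, w01, w12, w22] at c d e f g k l
  simp only [Fin.reduceEq, and_self, and_false, and_true, ↓reduceIte] at e f g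
  have y10 : Y 1 0 = 0 := IsNilpotent.eq_zero ⟨2, by
    linear_combination -(Y 1 0) * c + W 1 0 * e + X 1 0 * k⟩
  have y21 : Y 2 1 = 0 := IsNilpotent.eq_zero ⟨2, by
    linear_combination -(Y 2 1) * d + X 2 1 * l + W 2 1 * f⟩
  exact one_ne_zero (by linear_combination -g + X 2 1 * y10 - X 1 0 * y21 : (1 : R) = 0)

end CentralizerOfSingle

theorem LinearMap.toMatrixAlgEquiv_eq_single {R V ι : Type*} [CommRing R] [AddCommGroup V]
    [Module R V] [Fintype ι] [DecidableEq ι] (b : Basis ι R V) {f : Module.End R V} {i j : ι}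
    (hj : f (b j) = b i) (hk : ∀ k ≠ j, f (b k) = 0) :
    LinearMap.toMatrixAlgEquiv b f = Matrix.single i j 1 := by
  ext p q
  rw [LinearMap.toMatrixAlgEquiv_apply, Matrix.single_apply]
  by_cases hq : q = j
  · subst hq
    simp [hj, Finsupp.single_apply]
  · simp [hk q hq, Ne.symm hq]

theorem Module.End.mapsTo_maxGenEigenspace_of_mul_sub_mul {R M : Type*} [CommRing R]
    [AddCommGroup M] [Module R M] {f g y : Module.End R M} (h : g * f - f * g = y)
    (hy : Commute f y) (μ : R) :
    Set.MapsTo g (f.maxGenEigenspace μ) (f.maxGenEigenspace μ) := by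
  intro v hv
  simp only [SetLike.mem_coe, mem_maxGenEigenspace] at hv ⊢
  obtain ⟨k, hk⟩ := hv
  have hsub : g * (f - μ • 1) - (f - μ • 1) * g = y := by
    rw [mul_sub, sub_mul, mul_smul_comm, smul_mul_assoc, mul_one, one_mul,
      sub_sub_sub_cancel_right, h]
  have hpow := pow_succ_mul_eq_of_mul_sub_mul hsub
    (hy.sub_left ((Commute.one_left y).smul_left μ)) k
  refine ⟨k + 1, ?_⟩
  calc ((f - μ • 1) ^ (k + 1)) (g v) = ((f - μ • 1) ^ (k + 1) * g) v := rfl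
    _ = g (((f - μ • 1) ^ (k + 1)) v) - (k + 1) • y (((f - μ • 1) ^ k) v) := by rw [hpow]; rfl
    _ = 0 := by simp [pow_succ', mul_apply, hk]

theorem Module.End.maxGenEigenspace_ne_top_of_mul_sub_mul {R M : Type*} [CommRing R]
    [AddCommGroup M] [Module R M] [IsNoetherian R M] {f h : Module.End R M}
    (hhf : h * f - f * h = h) (hh : h ≠ 0) (μ : R) : f.maxGenEigenspace μ ≠ ⊤ := by
  intro htop
  refine hh (eq_zero_of_mul_sub_mul_eq_self (N := f - μ • 1) ?_ ?_)
  · rw [maxGenEigenspace_eq, genEigenspace_nat, LinearMap.ker_eq_top] at htop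
    exact ⟨_, htop⟩
  · rw [mul_sub, sub_mul, mul_smul_comm, smul_mul_assoc, mul_one, one_mul,
      sub_sub_sub_cancel_right, hhf]

/-- The relations of the filiform Lie algebra `n₄`; in `A₅,₂₂` they hold for
`(x, w, y, z) = (e₂, e₅, e₃, e₁)`. -/
structure FiliformRelations {A : Type*} [Ring A] (x w y z : A) : Prop where
  bracket_xw : x * w - w * x = y
  bracket_xy : x * y - y * x = z
  commute_yw : Commute y w
  commute_zx : Commute z x
  commute_zy : Commute z y
  commute_zw : Commute z w

namespace FiliformRelations

section Ring

variable {A B : Type*} [Ring A] [Ring B] {x w y z : A}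

theorem map (hr : FiliformRelations x w y z) {F : Type*} [FunLike F A B] [RingHomClass F A B]
    (f : F) : FiliformRelations (f x) (f w) (f y) (f z) where
  bracket_xw := by rw [← map_mul, ← map_mul, ← map_sub, hr.bracket_xw]
  bracket_xy := by rw [← map_mul, ← map_mul, ← map_sub, hr.bracket_xy]
  commute_yw := hr.commute_yw.map f
  commute_zx := hr.commute_zx.map f
  commute_zy := hr.commute_zy.map f
  commute_zw := hr.commute_zw.map f

theorem mul_pow (hr : FiliformRelations x w y z) (k : ℕ) :
    FiliformRelations x (w * z ^ k) (y * z ^ k) (z ^ (k + 1)) where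
  bracket_xw := by
    rw [mul_assoc w, (hr.commute_zx.pow_left k).eq, ← mul_assoc, ← mul_assoc, ← sub_mul,
      hr.bracket_xw]
  bracket_xy := by
    rw [mul_assoc y, (hr.commute_zx.pow_left k).eq, ← mul_assoc, ← mul_assoc, ← sub_mul,
      hr.bracket_xy, pow_succ']
  commute_yw := (hr.commute_yw.mul_left (hr.commute_zw.pow_left k)).mul_right
    ((hr.commute_zy.pow_left k).symm.mul_left (Commute.refl _))
  commute_zx := hr.commute_zx.pow_left _
  commute_zy := (hr.commute_zy.pow_left _).mul_right (Commute.pow_pow_self z _ _)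
  commute_zw := (hr.commute_zw.pow_left _).mul_right (Commute.pow_pow_self z _ _)

end Ring

theorem restrict {R M : Type*} [CommRing R] [AddCommGroup M] [Module R M]
    {x w y z : Module.End R M} (hr : FiliformRelations x w y z) {p : Submodule R M}
    (hx : Set.MapsTo x p p) (hw : Set.MapsTo w p p) (hy : Set.MapsTo y p p)
    (hz : Set.MapsTo z p p) :
    FiliformRelations (x.restrict hx) (w.restrict hw) (y.restrict hy) (z.restrict hz) where
  bracket_xw := LinearMap.ext fun v => Subtype.ext (LinearMap.congr_fun hr.bracket_xw v)
  bracket_xy := LinearMap.ext fun v => Subtype.ext (LinearMap.congr_fun hr.bracket_xy v)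
  commute_yw := LinearMap.restrict_commute hr.commute_yw hy hw
  commute_zx := LinearMap.restrict_commute hr.commute_zx hz hx
  commute_zy := LinearMap.restrict_commute hr.commute_zy hz hy
  commute_zw := LinearMap.restrict_commute hr.commute_zw hz hw

variable {K V : Type*} [Field K] [AddCommGroup V] [Module K V] [FiniteDimensional K V]
  {x w y z : Module.End K V}

theorem not_ker_le_span_singleton (hr : FiliformRelations x w y z) (hzz : z * z = 0) {v : V}
    (hv : z v ≠ 0) : ¬ LinearMap.ker z ≤ K ∙ z v := by
  intro hle
  have hzv : z v ∈ LinearMap.ker z := LinearMap.congr_fun hzz v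
  have hli : LinearIndependent K ![v, z v] := linearIndependent_finCons.2
    ⟨by simpa using hv, by simpa using fun h => hv ((span_singleton_le_iff_mem _ _).2 hzv h)⟩
  have hdim : finrank K V = 2 := by
    refine le_antisymm ?_ (by simpa using hli.fintype_card_le_finrank)
    have := Submodule.finrank_mono hle
    have := Submodule.finrank_mono ((LinearMap.range_le_ker_iff).2 hzz)
    have := finrank_span_singleton (K := K) hv
    have := LinearMap.finrank_range_add_finrank_ker z
    omega
  let b := basisOfLinearIndependentOfCardEqFinrank hli (by simp [hdim])
  have hb : ⇑b = ![v, z v] := coe_basisOfLinearIndependentOfCardEqFinrank _ _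
  have hMz : LinearMap.toMatrixAlgEquiv b z = single 1 0 1 :=
    LinearMap.toMatrixAlgEquiv_eq_single b (by simp [hb]) fun k hk => by
      fin_cases k
      · exact absurd rfl hk
      · simpa [hb] using hzv
  have hM := hr.map (LinearMap.toMatrixAlgEquiv b)
  rw [hMz] at hM
  exact mul_sub_mul_ne_single_of_commute_fin_two hM.commute_zx hM.commute_zy hM.bracket_xy

theorem eq_zero_of_mul_self_eq_zero (hr : FiliformRelations x w y z) (hV : finrank K V ≤ 3)
    (hzz : z * z = 0) : z = 0 := by
  by_contra hz
  obtain ⟨v, hv⟩ : ∃ v, z v ≠ 0 := by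
    by_contra! h
    exact hz (LinearMap.ext h)
  have hzv : z v ∈ LinearMap.ker z := LinearMap.congr_fun hzz v
  obtain ⟨e, he, he'⟩ := SetLike.not_le_iff_exists.1 (hr.not_ker_le_span_singleton hzz hv)
  have hli : LinearIndependent K ![v, e, z v] := by
    refine linearIndependent_finCons.2
      ⟨linearIndependent_finCons.2 ⟨by simpa using hv, by simpa using he'⟩, ?_⟩
    have : span K (Set.range ![e, z v]) ≤ LinearMap.ker z := by
      simp [span_le, Set.insert_subset_iff, he, hzv]
    exact fun h => hv (this h)
  let b := basisOfLinearIndependentOfCardEqFinrank hli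
    (le_antisymm (by simpa using hli.fintype_card_le_finrank) (by simpa using hV))
  have hb : ⇑b = ![v, e, z v] := coe_basisOfLinearIndependentOfCardEqFinrank _ _
  have hMz : LinearMap.toMatrixAlgEquiv b z = single 2 0 1 :=
    LinearMap.toMatrixAlgEquiv_eq_single b (by simp [hb]) fun k hk => by
      fin_cases k
      · exact absurd rfl hk
      · simpa [hb] using he
      · simpa [hb] using hzv
  have hM := hr.map (LinearMap.toMatrixAlgEquiv b)
  rw [hMz] at hM
  exact mul_sub_mul_ne_single_of_commute_fin_three hM.commute_zx hM.commute_zy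
    hM.commute_zw hM.bracket_xw hM.commute_yw hM.bracket_xy

theorem eq_zero_of_isNilpotent (hr : FiliformRelations x w y z) (hV : finrank K V ≤ 3)
    (hz : IsNilpotent z) : z = 0 := by
  obtain ⟨n, hn⟩ := hz
  suffices ∀ k, z ^ (k + 1) = 0 → z = 0 from this n (by rw [pow_succ, hn, zero_mul])
  intro k
  induction k with
  | zero => simp
  | succ k ih =>
    intro hk
    refine ih ((hr.mul_pow k).eq_zero_of_mul_self_eq_zero hV ?_)
    rw [← pow_add, show k + 1 + (k + 1) = k + 2 + k by ring, pow_add, hk, zero_mul]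

theorem eq_zero_of_finrank_le_four [IsAlgClosed K] {h : Module.End K V}
    (hr : FiliformRelations x w y z) (hV : finrank K V ≤ 4) (hz : IsNilpotent z)
    (hhw : h * w - w * h = h) (hh : h ≠ 0) : z = 0 := by
  have hle : ∀ μ, w.maxGenEigenspace μ ≤ LinearMap.ker z := by
    intro μ
    have hdim : finrank K (w.maxGenEigenspace μ) ≤ 3 := by
      have := Submodule.finrank_lt (Module.End.maxGenEigenspace_ne_top_of_mul_sub_mul hhw hh μ)
      omega
    have hzp := (hr.restrict
      (Module.End.mapsTo_maxGenEigenspace_of_mul_sub_mul hr.bracket_xw hr.commute_yw.symm μ)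
      (Module.End.mapsTo_maxGenEigenspace_of_comm (Commute.refl w) μ)
      (Module.End.mapsTo_maxGenEigenspace_of_comm hr.commute_yw.symm μ)
      (Module.End.mapsTo_maxGenEigenspace_of_comm hr.commute_zw.symm μ)).eq_zero_of_isNilpotent
        hdim (Module.End.isNilpotent.restrict _ hz)
    intro v hv
    exact congr_arg Subtype.val (LinearMap.congr_fun hzp ⟨v, hv⟩)
  have := iSup_le hle
  rw [Module.End.iSup_maxGenEigenspace_eq_top] at this
  exact LinearMap.ker_eq_top.mp (top_le_iff.mp this)

end FiliformRelations

/-- The algebra `A₅,₂₂` (`[e₂,e₃]=e₁`, `[e₂,e₅]=e₃`, `[e₄,e₅]=e₄`) has no faithful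
representation by upper triangular matrices in `gl(4,ℝ)`. Here `E 0,…,E 4`
correspond to `e₁,…,e₅`. -/
theorem stmt7 :
    ¬ ∃ E : Fin 5 → Matrix (Fin 4) (Fin 4) ℝ,
      (∀ k, ∀ i j : Fin 4, j < i → E k i j = 0) ∧
      LinearIndependent ℝ E ∧
      E 1 * E 2 - E 2 * E 1 = E 0 ∧
      E 1 * E 4 - E 4 * E 1 = E 2 ∧
      E 3 * E 4 - E 4 * E 3 = E 3 ∧
      E 0 * E 1 - E 1 * E 0 = 0 ∧
      E 0 * E 2 - E 2 * E 0 = 0 ∧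
      E 0 * E 3 - E 3 * E 0 = 0 ∧
      E 0 * E 4 - E 4 * E 0 = 0 ∧
      E 1 * E 3 - E 3 * E 1 = 0 ∧
      E 2 * E 3 - E 3 * E 2 = 0 ∧
      E 2 * E 4 - E 4 * E 2 = 0 := by
  rintro ⟨E, htri, hli, h12, h14, h34, h01, h02, -, h04, -, -, h24⟩
  have hr : FiliformRelations (E 1) (E 4) (E 2) (E 0) :=
    ⟨h14, h12, sub_eq_zero.mp h24, sub_eq_zero.mp h01, sub_eq_zero.mp h02, sub_eq_zero.mp h04⟩
  have hnil : IsNilpotent (E 0) :=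
    h12 ▸ Matrix.IsUpperTriangular.isNilpotent_mul_sub_mul (fun i j => htri 1 i j)
      (fun i j => htri 2 i j)
  let φ : Matrix (Fin 4) (Fin 4) ℝ →+* Module.End ℂ (Fin 4 → ℂ) :=
    Matrix.toLinAlgEquiv'.toRingHom.comp (algebraMap ℝ ℂ).mapMatrix
  have hφ : Function.Injective φ :=
    Matrix.toLinAlgEquiv'.injective.comp (Matrix.map_injective (algebraMap ℝ ℂ).injective)
  have hφ34 : φ (E 3) * φ (E 4) - φ (E 4) * φ (E 3) = φ (E 3) := by
    rw [← map_mul, ← map_mul, ← map_sub, h34]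
  have hE0 := (hr.map φ).eq_zero_of_finrank_le_four (by simp) (hnil.map φ) hφ34
    ((map_ne_zero_iff φ hφ).mpr (hli.ne_zero 3))
  exact hli.ne_zero 0 ((map_eq_zero_iff φ hφ).mp hE0)
end

section
/- Over ℂ, the Lie algebra A₅,₃₇ (nonzero brackets [e₂,e₃]=e₁, [e₁,e₄]=2e₁, [e₂,e₄]=e₂, [e₃,e₄]=e₃, [e₂,e₅]=−e₃, [e₃,e₅]=e₂) is isomorphic to the complexification of A₅,₃₆ (nonzero brackets [e₂,e₃]=e₁, [e₁,e₄]=e₁, [e₂,e₄]=e₂, [e₂,e₅]=−e₂, [e₃,e₅]=e₃). An explicit isomorphism is given on the complexified basis by ē₁ = −e₁/2, ē₂ = (e₂+e₃)/2, ē₃ = i(e₂−e₃)/2, ē₄ = 2e₄+e₅, ē₅ = −i e₅, followed by rescaling ē₁ to remove a factor of i. -/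
/-!
Let `f₁, …, f₅` (in Lean `f 0, …, f 4`) be an `A₅,₃₆` basis of `h`. The vectors
`ē = ((i/2) f₁, (f₂ + f₃)/2, -i (f₂ - f₃)/2, 2f₄ + f₅, -i f₅)` form a basis of `h` with the
`A₅,₃₇` bracket table: `ad f₅` is diagonal on `⟨f₂, f₃⟩` with eigenvalues `∓1`, so `ad (-i f₅)` is
a rotation in the basis `ē₂, ē₃`; `ad (2f₄ + f₅)` acts by `1` on that plane and by `2` on `f₁`;
and the factor `i/2` makes `[ē₂, ē₃] = ē₁`. Hence `eₖ ↦ ēₖ` is a Lie algebra isomorphism.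
-/

theorem LinearMap.map_lie_of_basis {ι R L L' : Type*} [LinearOrder ι] [CommRing R]
    [LieRing L] [LieAlgebra R L] [LieRing L'] [LieAlgebra R L']
    (φ : L →ₗ[R] L') (b : Module.Basis ι R L)
    (h : ∀ i j, i < j → φ ⁅b i, b j⁆ = ⁅φ (b i), φ (b j)⁆) (x y : L) :
    φ ⁅x, y⁆ = ⁅φ x, φ y⁆ := by
  have hb : ∀ i j, φ ⁅b i, b j⁆ = ⁅φ (b i), φ (b j)⁆ := by
    intro i j
    rcases lt_trichotomy i j with hij | rfl | hji
    · exact h i j hij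
    · simp
    · rw [← lie_skew, map_neg, h j i hji, lie_skew]
  have hbilin := LinearMap.ext_basis
    (B := (LieModule.toEnd R L L : L →ₗ[R] Module.End R L).compr₂ φ)
    (B' := (LieModule.toEnd R L' L' : L' →ₗ[R] Module.End R L').compl₁₂ φ φ) b b
    (by simpa using hb)
  simpa using LinearMap.congr_fun₂ hbilin x y

open Complex in
/-- Over `ℂ`, the Lie algebra `A₅,₃₇` is isomorphic to (the complexification of)
`A₅,₃₆`: any complex Lie algebra with a basis satisfying the `A₅,₃₇` bracket table
is isomorphic to any complex Lie algebra with a basis satisfying the `A₅,₃₆`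
bracket table. -/
theorem stmt15 {g h : Type*} [LieRing g] [LieAlgebra ℂ g] [LieRing h] [LieAlgebra ℂ h]
    (e : Module.Basis (Fin 5) ℂ g) (f : Module.Basis (Fin 5) ℂ h)
    -- A₅,₃₇ bracket table on e
    (he23 : ⁅e 1, e 2⁆ = e 0) (he14 : ⁅e 0, e 3⁆ = (2 : ℂ) • e 0)
    (he24 : ⁅e 1, e 3⁆ = e 1) (he34 : ⁅e 2, e 3⁆ = e 2)
    (he25 : ⁅e 1, e 4⁆ = -e 2) (he35 : ⁅e 2, e 4⁆ = e 1)
    (he12 : ⁅e 0, e 1⁆ = 0) (he13 : ⁅e 0, e 2⁆ = 0)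
    (he15 : ⁅e 0, e 4⁆ = 0) (he45 : ⁅e 3, e 4⁆ = 0)
    -- A₅,₃₆ bracket table on f
    (hf23 : ⁅f 1, f 2⁆ = f 0) (hf14 : ⁅f 0, f 3⁆ = f 0)
    (hf24 : ⁅f 1, f 3⁆ = f 1) (hf25 : ⁅f 1, f 4⁆ = -f 1)
    (hf35 : ⁅f 2, f 4⁆ = f 2)
    (hf12 : ⁅f 0, f 1⁆ = 0) (hf13 : ⁅f 0, f 2⁆ = 0)
    (hf15 : ⁅f 0, f 4⁆ = 0) (hf34 : ⁅f 2, f 3⁆ = 0) (hf45 : ⁅f 3, f 4⁆ = 0) :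
    Nonempty (g ≃ₗ⁅ℂ⁆ h) := by
  let w : Fin 5 → h := ![(I / 2) • f 0, (1 / 2 : ℂ) • (f 1 + f 2), (-(I / 2)) • (f 1 - f 2),
    (2 : ℂ) • f 3 + f 4, (-I) • f 4]
  let v : Fin 5 → g := ![(-(2 * I)) • e 0, e 1 + I • e 2, e 1 - I • e 2,
    (1 / 2 : ℂ) • e 3 + (-(I / 2)) • e 4, I • e 4]
  obtain ⟨hwv, hvw⟩ : (e.constr ℂ w).comp (f.constr ℂ v) = LinearMap.id ∧
      (f.constr ℂ v).comp (e.constr ℂ w) = LinearMap.id := by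
    refine ⟨f.ext fun i => ?_, e.ext fun i => ?_⟩ <;> fin_cases i <;>
      simp only [Fin.reduceFinMk, Fin.isValue, LinearMap.comp_apply, LinearMap.id_apply,
        Module.Basis.constr_basis, Matrix.cons_val, v, w, map_add, map_sub, map_smul] <;>
      match_scalars <;> ring_nf <;> simp only [I_sq] <;> ring
  have hf32 : ⁅f 2, f 1⁆ = -f 0 := by rw [← lie_skew, hf23]
  have hlie : ∀ i j, i < j →
      e.constr ℂ w ⁅e i, e j⁆ = ⁅e.constr ℂ w (e i), e.constr ℂ w (e j)⁆ := by
    intro i j hij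
    fin_cases i <;> fin_cases j <;> simp only [Fin.reduceFinMk, Fin.reduceLT] at hij <;>
      simp only [Fin.reduceFinMk, Fin.isValue, Module.Basis.constr_basis, Matrix.cons_val, w,
        map_smul, map_neg, map_zero, lie_add, add_lie, lie_sub, sub_lie, lie_smul, smul_lie,
        lie_self, he23, he14, he24, he34, he25, he35, he12, he13, he15, he45,
        hf23, hf14, hf24, hf25, hf35, hf12, hf13, hf15, hf34, hf45, hf32] <;>
      match_scalars <;> ring_nf <;> simp only [I_sq] <;> ring
  let φ : g ≃ₗ[ℂ] h := .ofLinearMap _ _ hwv hvw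
  exact ⟨{ φ with map_lie' := (e.constr ℂ w).map_lie_of_basis e hlie _ _ }⟩
end

section
/- Let E₄ = [[0,t,u,v],[0,0,p,q],[0,0,0,r],[0,0,0,0]] and E₅ = [[a,b,c,d],[0,e,f,g],[0,0,h,i],[0,0,0,j]] be real 4×4 matrices, and define E₃ = [E₄,E₅] − E₄, E₂ = [E₃,E₄], E₁ = [E₂,E₄]. Then E₁ has a single possibly-nonzero entry, in position (1,4), equal to t·p·r·(3e − a − 3h + j). Moreover if [E₃,E₅] = E₃ then t(e−a−1)² = 0, p(h−e−1)² = 0, r(j−h−1)² = 0; hence if additionally tpr ≠ 0 then e = a+1, h = e+1, j = h+1 and E₁ = 0. -/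
/-!
If `A` vanishes below its `k`-th superdiagonal and `B` below its `l`-th, then `A * B` vanishes below
its `(k + l)`-th, where its entries are single products. As `E₄` is strictly and `E₅` weakly upper
triangular, `E₃`, `E₂`, `E₁` vanish below their first, second and third superdiagonals, and `E₁ 0 3`
is a polynomial in the superdiagonals of `E₃` and `E₄`. On the superdiagonal, bracketing with `E₅`
multiplies by the difference `δ` of consecutive diagonal entries of `E₅`. So `E₃` has superdiagonal
entries `x (δ - 1)`, with `x` those of `E₄`, and `[E₃, E₅] = E₃` reads `x (δ - 1) δ = x (δ - 1)`,
that is `x (δ - 1) ^ 2 = 0`.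
-/

namespace Matrix

variable {n : ℕ} {R : Type*}

/-- `k = 0`: upper triangular; `k = 1`: strictly upper triangular. -/
def IsUpperFromDiag [Zero R] (k : ℕ) (A : Matrix (Fin n) (Fin n) R) : Prop :=
  ∀ i j : Fin n, (j : ℕ) < i + k → A i j = 0

theorem IsUpperFromDiag.sub [AddGroup R] {k : ℕ} {A B : Matrix (Fin n) (Fin n) R}
    (hA : IsUpperFromDiag k A) (hB : IsUpperFromDiag k B) : IsUpperFromDiag k (A - B) :=
  fun i j h => by rw [sub_apply, hA i j h, hB i j h, sub_zero]

section Ring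

variable [Ring R] {k l : ℕ} {A B : Matrix (Fin n) (Fin n) R}

theorem IsUpperFromDiag.mul (hA : IsUpperFromDiag k A) (hB : IsUpperFromDiag l B) :
    IsUpperFromDiag (k + l) (A * B) := fun i j hij => by
  rw [mul_apply]
  refine Finset.sum_eq_zero fun m _ => ?_
  rcases lt_or_ge (m : ℕ) (i + k) with h | h
  · rw [hA i m h, zero_mul]
  · rw [hB m j (by omega), mul_zero]

theorem IsUpperFromDiag.lie (hA : IsUpperFromDiag k A) (hB : IsUpperFromDiag l B) :
    IsUpperFromDiag (k + l) ⁅A, B⁆ := by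
  rw [Ring.lie_def]
  exact (hA.mul hB).sub (add_comm l k ▸ hB.mul hA)

theorem IsUpperFromDiag.mul_apply_of_eq (hA : IsUpperFromDiag k A) (hB : IsUpperFromDiag l B)
    {i m j : Fin n} (hm : (m : ℕ) = i + k) (hj : (j : ℕ) = m + l) :
    (A * B) i j = A i m * B m j := by
  rw [mul_apply]
  refine Finset.sum_eq_single m (fun m' _ hm' => ?_) (by simp)
  have hm'm : (m' : ℕ) ≠ m := Fin.val_ne_of_ne hm'
  rcases lt_or_ge (m' : ℕ) m with h | h
  · rw [hA i m' (by omega), zero_mul]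
  · rw [hB m' j (by omega), mul_zero]

theorem IsUpperFromDiag.lie_apply_of_eq (hA : IsUpperFromDiag k A) (hB : IsUpperFromDiag l B)
    {i m m' j : Fin n} (hm : (m : ℕ) = i + k) (hm' : (m' : ℕ) = i + l)
    (hj : (j : ℕ) = i + k + l) :
    ⁅A, B⁆ i j = A i m * B m j - B i m' * A m' j := by
  rw [Ring.lie_def, sub_apply, hA.mul_apply_of_eq hB hm (by omega),
    hB.mul_apply_of_eq hA hm' (by omega)]

end Ring

section CommRing

variable [CommRing R] {A D : Matrix (Fin n) (Fin n) R}

theorem IsUpperFromDiag.lie_apply_superdiag (hA : IsUpperFromDiag 1 A)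
    (hD : IsUpperFromDiag 0 D) {i j : Fin n} (hj : (j : ℕ) = i + 1) :
    ⁅A, D⁆ i j = A i j * (D j j - D i i) := by
  rw [hA.lie_apply_of_eq hD hj rfl hj, mul_sub, mul_comm (D i i)]

theorem IsUpperFromDiag.lie_sub_apply_superdiag (hA : IsUpperFromDiag 1 A)
    (hD : IsUpperFromDiag 0 D) {i j : Fin n} (hj : (j : ℕ) = i + 1) :
    (⁅A, D⁆ - A) i j = A i j * (D j j - D i i - 1) := by
  rw [sub_apply, hA.lie_apply_superdiag hD hj]
  ring

theorem IsUpperFromDiag.mul_sq_eq_zero_of_lie_eq (hA : IsUpperFromDiag 1 A)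
    (hD : IsUpperFromDiag 0 D) (hS : ⁅⁅A, D⁆ - A, D⁆ = ⁅A, D⁆ - A) {i j : Fin n}
    (hj : (j : ℕ) = i + 1) :
    A i j * (D j j - D i i - 1) ^ 2 = 0 := by
  have h := congrFun₂ hS i j
  rw [((hA.lie hD).sub hA).lie_apply_superdiag hD hj, hA.lie_sub_apply_superdiag hD hj] at h
  linear_combination h

theorem lie_lie_apply_zero_three {S N : Matrix (Fin 4) (Fin 4) R} (hS : IsUpperFromDiag 1 S)
    (hN : IsUpperFromDiag 1 N) :
    ⁅⁅S, N⁆, N⁆ 0 3 =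
      S 0 1 * N 1 2 * N 2 3 - 2 * (N 0 1 * S 1 2 * N 2 3) + N 0 1 * N 1 2 * S 2 3 := by
  rw [(hS.lie hN).lie_apply_of_eq hN (m := 2) (m' := 1) rfl rfl rfl,
    hS.lie_apply_of_eq hN (i := 0) (m := 1) (m' := 1) (j := 2) rfl rfl rfl,
    hS.lie_apply_of_eq hN (i := 1) (m := 2) (m' := 2) (j := 3) rfl rfl rfl]
  ring

end CommRing

end Matrix

theorem eq_add_one_of_mul_sq_eq_zero {R : Type*} [CommRing R] [NoZeroDivisors R] {x y z : R}
    (hx : x ≠ 0) (h : x * (y - z - 1) ^ 2 = 0) : y = z + 1 := by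
  have := pow_eq_zero_iff two_ne_zero |>.mp ((mul_eq_zero.mp h).resolve_left hx)
  linear_combination this

/-- Key computation for the nonexistence of a `gl(4,ℝ)` representation of
`A₅,₃₁`. -/
theorem stmt17 (a b c d e f g h i j p q r t u v : ℝ)
    (E₁ E₂ E₃ E₄ E₅ : Matrix (Fin 4) (Fin 4) ℝ)
    (hE₄ : E₄ = !![0,t,u,v; 0,0,p,q; 0,0,0,r; 0,0,0,0])
    (hE₅ : E₅ = !![a,b,c,d; 0,e,f,g; 0,0,h,i; 0,0,0,j])
    (hE₃ : E₃ = (E₄ * E₅ - E₅ * E₄) - E₄)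
    (hE₂ : E₂ = E₃ * E₄ - E₄ * E₃)
    (hE₁ : E₁ = E₂ * E₄ - E₄ * E₂) :
    (∀ k l : Fin 4, ¬(k = 0 ∧ l = 3) → E₁ k l = 0) ∧
    E₁ 0 3 = t * p * r * (3 * e - a - 3 * h + j) ∧
    (E₃ * E₅ - E₅ * E₃ = E₃ →
      t * (e - a - 1) ^ 2 = 0 ∧ p * (h - e - 1) ^ 2 = 0 ∧ r * (j - h - 1) ^ 2 = 0) ∧
    (E₃ * E₅ - E₅ * E₃ = E₃ → t * p * r ≠ 0 →
      e = a + 1 ∧ h = e + 1 ∧ j = h + 1 ∧ E₁ = 0) := by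
  simp only [← Ring.lie_def] at hE₃ hE₂ hE₁ ⊢
  subst hE₃ hE₂ hE₁
  have h₄ : Matrix.IsUpperFromDiag 1 E₄ := by
    intro k l hkl; subst hE₄; fin_cases k <;> fin_cases l <;> simp_all
  have h₅ : Matrix.IsUpperFromDiag 0 E₅ := by
    intro k l hkl; subst hE₅; fin_cases k <;> fin_cases l <;> simp_all
  have h₃ : Matrix.IsUpperFromDiag 1 (⁅E₄, E₅⁆ - E₄) := (h₄.lie h₅).sub h₄
  have corner : ∀ k l : Fin 4, ¬(k = 0 ∧ l = 3) → ⁅⁅⁅E₄, E₅⁆ - E₄, E₄⁆, E₄⁆ k l = 0 :=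
    fun k l hkl => (h₃.lie h₄).lie h₄ k l (by fin_cases k <;> fin_cases l <;> simp_all)
  have value : ⁅⁅⁅E₄, E₅⁆ - E₄, E₄⁆, E₄⁆ 0 3 = t * p * r * (3 * e - a - 3 * h + j) := by
    rw [Matrix.lie_lie_apply_zero_three h₃ h₄, h₄.lie_sub_apply_superdiag h₅ rfl,
      h₄.lie_sub_apply_superdiag h₅ rfl, h₄.lie_sub_apply_superdiag h₅ rfl]
    simp [hE₄, hE₅]
    ring
  have squares (hS : ⁅⁅E₄, E₅⁆ - E₄, E₅⁆ = ⁅E₄, E₅⁆ - E₄) :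
      t * (e - a - 1) ^ 2 = 0 ∧ p * (h - e - 1) ^ 2 = 0 ∧ r * (j - h - 1) ^ 2 = 0 := by
    have := fun (k l : Fin 4) (hl : (l : ℕ) = k + 1) => h₄.mul_sq_eq_zero_of_lie_eq h₅ hS hl
    simpa [hE₄, hE₅] using And.intro (this 0 1 rfl) (And.intro (this 1 2 rfl) (this 2 3 rfl))
  refine ⟨corner, value, squares, fun hS htpr => ?_⟩
  obtain ⟨⟨ht, hp⟩, hr⟩ := (mul_ne_zero_iff.mp htpr).imp_left mul_ne_zero_iff.mp
  obtain ⟨s₁, s₂, s₃⟩ := squares hS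
  have he := eq_add_one_of_mul_sq_eq_zero ht s₁
  have hh := eq_add_one_of_mul_sq_eq_zero hp s₂
  have hj := eq_add_one_of_mul_sq_eq_zero hr s₃
  refine ⟨he, hh, hj, Matrix.ext fun k l => ?_⟩
  by_cases hkl : k = 0 ∧ l = 3
  · obtain ⟨rfl, rfl⟩ := hkl
    rw [value, hj, hh, he, Matrix.zero_apply]; ring
  · exact corner k l hkl
end
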